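/- Let N : ℕ be even with 0 < N, let c₁ : ℝ with k := 2·N·c₁ ∈ ℤ, let P : ℕ, and for each p ∈ {1,…,P} let h_p ∈ ℂ, f_p ∈ ℤ, ℓ_p ∈ {0,…,N−1}. Suppose the location indices loc_p := (f_p + k·ℓ_p) mod N are pairwise distinct. Define the effective AFDM channel G = F_N·Λ_{c₁}·(Σ_{p=1}^{P} h_p·W^{f_p}·L^{ℓ_p})·Λ_{c₁}ᴴ·F_Nᴴ. Then for every row index m ∈ {0,…,N−1} and every p, the entry of G at position (m, m') with m' ≡ m + loc_p (mod N) has modulus |h_p|, and all entries of row m at columns m' with (m' − m) mod N ∉ {loc_1,…,loc_P} are zero; in particular each row of G has at most P nonzero entries. -/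

import Mathlib

/-!
Conjugation by the chirp turns a delay into a Doppler shift: for even `N` and `2Nc = k ∈ ℤ` the
chirp phase `n ↦ exp(-2πi c n²)` is `N`-periodic on `ℤ`, and `c n² - c (n - ℓ)² = kℓn/N - cℓ²`, so
`Λ_c L^ℓ Λ_cᴴ = exp(2πi cℓ²) W^{kℓ} L^ℓ`. Conjugating `W^a L^ℓ` by the DFT then gives, by
orthogonality of the characters `n ↦ exp(2πi n a / N)`, a matrix whose entry `(m, m')` is a
unimodular phase when `m' ≡ m + a (mod N)` and zero otherwise. So path `p` lives on the cyclic
diagonal `m' - m ≡ f_p + kℓ_p ≡ loc_p`, and distinct locations put distinct paths on distinct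
diagonals.
-/

open Matrix Complex

/-- The `N`-point DFT matrix `F_N` with entries `(1/√N)·exp(-2πi·m·n/N)`. -/
noncomputable def dftMatrix (N : ℕ) : Matrix (Fin N) (Fin N) ℂ :=
  fun m n => (1 / Real.sqrt N : ℂ) *
    Complex.exp (-2 * Real.pi * Complex.I * (m : ℕ) * (n : ℕ) / N)

/-- The diagonal chirp matrix `Λ_c` with diagonal entries `exp(-2πi·c·n²)`. -/
noncomputable def chirpMatrix (N : ℕ) (c : ℝ) : Matrix (Fin N) (Fin N) ℂ :=
  Matrix.diagonal fun n => Complex.exp (-2 * Real.pi * Complex.I * c * (n : ℕ) ^ 2)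

/-- The diagonal Doppler matrix `W^f` with diagonal entries `exp(-2πi·f·n/N)`. -/
noncomputable def dopplerMatrix (N : ℕ) (f : ℤ) : Matrix (Fin N) (Fin N) ℂ :=
  Matrix.diagonal fun n => Complex.exp (-2 * Real.pi * Complex.I * (f : ℂ) * (n : ℕ) / N)

/-- The cyclic delay matrix `L^ℓ` with `[L^ℓ]_{n,n'} = 1` iff `n' ≡ n − ℓ (mod N)`. -/
def delayMatrix (N : ℕ) (ℓ : ℕ) : Matrix (Fin N) (Fin N) ℂ :=
  fun n n' => if Int.ModEq (N : ℤ) (n' : ℤ) ((n : ℤ) - (ℓ : ℤ)) then 1 else 0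

noncomputable def expTwoPiI (x : ℝ) : ℂ := Complex.exp (2 * Real.pi * Complex.I * x)

lemma expTwoPiI_add (x y : ℝ) : expTwoPiI (x + y) = expTwoPiI x * expTwoPiI y := by
  simp only [expTwoPiI, ← Complex.exp_add]; push_cast; ring_nf

lemma expTwoPiI_intCast (j : ℤ) : expTwoPiI j = 1 := by
  rw [expTwoPiI, ← Complex.exp_int_mul_two_pi_mul_I j]; push_cast; ring_nf

lemma expTwoPiI_add_intCast (x : ℝ) (j : ℤ) : expTwoPiI (x + j) = expTwoPiI x := by
  rw [expTwoPiI_add, expTwoPiI_intCast, mul_one]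

lemma expTwoPiI_natCast_mul (n : ℕ) (x : ℝ) : expTwoPiI (n * x) = expTwoPiI x ^ n := by
  rw [expTwoPiI, expTwoPiI, ← Complex.exp_nat_mul]; push_cast; ring_nf

lemma norm_expTwoPiI (x : ℝ) : ‖expTwoPiI x‖ = 1 := by
  rw [expTwoPiI, show 2 * Real.pi * Complex.I * x = ((2 * Real.pi * x : ℝ) : ℂ) * Complex.I by
    push_cast; ring]
  exact Complex.norm_exp_ofReal_mul_I _

lemma star_expTwoPiI (x : ℝ) : star (expTwoPiI x) = expTwoPiI (-x) := by
  rw [expTwoPiI, expTwoPiI, Complex.star_def, ← Complex.exp_conj]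
  simp only [map_mul, Complex.conj_I, Complex.conj_ofReal, map_ofNat]
  push_cast; ring_nf

lemma expTwoPiI_eq_one_iff (x : ℝ) : expTwoPiI x = 1 ↔ ∃ j : ℤ, x = j := by
  rw [expTwoPiI, Complex.exp_eq_one_iff]
  constructor
  · rintro ⟨j, hj⟩
    refine ⟨j, ?_⟩
    have h : (2 * Real.pi * Complex.I) * x = (2 * Real.pi * Complex.I) * j := by rw [hj]; ring
    exact_mod_cast mul_left_cancel₀ (by simp [Real.pi_ne_zero]) h
  · rintro ⟨j, rfl⟩
    exact ⟨j, by push_cast; ring⟩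

lemma sum_expTwoPiI_mul_div (N : ℕ) [NeZero N] (a : ℤ) :
    ∑ n : Fin N, expTwoPiI ((n : ℕ) * (a / N)) = if (N : ℤ) ∣ a then (N : ℂ) else 0 := by
  have hN : (N : ℝ) ≠ 0 := NeZero.ne _
  simp only [expTwoPiI_natCast_mul, Fin.sum_univ_eq_sum_range (expTwoPiI (a / N) ^ ·)]
  have hpow : expTwoPiI (a / N) ^ N = 1 := by
    rw [← expTwoPiI_natCast_mul, mul_div_cancel₀ _ hN, expTwoPiI_intCast]
  have hone : expTwoPiI (a / N) = 1 ↔ (N : ℤ) ∣ a := by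
    rw [expTwoPiI_eq_one_iff]
    constructor
    · rintro ⟨j, hj⟩
      exact ⟨j, by exact_mod_cast (div_eq_iff hN).mp hj |>.trans (mul_comm _ _)⟩
    · rintro ⟨j, rfl⟩
      exact ⟨j, by push_cast; field_simp⟩
  split_ifs with hdvd
  · simp [hone.mpr hdvd]
  · rw [geom_sum_eq (mt hone.mp hdvd), hpow, sub_self, zero_div]

lemma Function.Periodic.eq_of_intModEq {α : Type*} {u : ℤ → α} {N : ℤ} (hu : Function.Periodic u N)
    {a b : ℤ} (h : a ≡ b [ZMOD N]) : u a = u b := by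
  obtain ⟨t, ht⟩ := h.dvd
  rw [show b = a + t * N by rw [← sub_add_cancel b a, ht]; ring]
  exact ((hu.int_mul t) a).symm

lemma Fin.eq_of_intCast_modEq {N : ℕ} {a b : Fin N} (h : (a : ℤ) ≡ b [ZMOD N]) : a = b :=
  Fin.ext <| (Int.natCast_modEq_iff.mp h).eq_of_lt_of_lt a.isLt b.isLt

lemma Fin.exists_intCast_modEq (N : ℕ) [NeZero N] (x : ℤ) : ∃ n : Fin N, (n : ℤ) ≡ x [ZMOD N] :=
  ⟨⟨(x : ZMod N).val, ZMod.val_lt _⟩, by simpa only [ZMod.val_intCast] using Int.mod_modEq x N⟩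

lemma sum_delayMatrix_mul {N : ℕ} [NeZero N] (ℓ : ℕ) {u : ℤ → ℂ} (hu : Function.Periodic u N)
    (n : Fin N) : ∑ n', delayMatrix N ℓ n n' * u n' = u (n - ℓ) := by
  obtain ⟨n₀, hn₀⟩ := Fin.exists_intCast_modEq N (n - ℓ)
  rw [Finset.sum_eq_single n₀]
  · simp [delayMatrix, hn₀, hu.eq_of_intModEq hn₀]
  · intro n' _ hne
    simp only [delayMatrix, ite_mul, one_mul, zero_mul, ite_eq_right_iff]
    exact fun h => absurd (Fin.eq_of_intCast_modEq (h.trans hn₀.symm)) hne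
  · simp

lemma dftMatrix_apply (N : ℕ) (m n : Fin N) :
    dftMatrix N m n = (Real.sqrt N : ℂ)⁻¹ * expTwoPiI (-((m : ℕ) * (n : ℕ) / N)) := by
  rw [dftMatrix, expTwoPiI, one_div]; push_cast; ring_nf

lemma conjTranspose_dftMatrix_apply (N : ℕ) (n m : Fin N) :
    (dftMatrix N)ᴴ n m = (Real.sqrt N : ℂ)⁻¹ * expTwoPiI ((m : ℕ) * (n : ℕ) / N) := by
  rw [conjTranspose_apply, dftMatrix_apply, star_mul', star_expTwoPiI, neg_neg, star_inv₀,
    Complex.star_def, Complex.conj_ofReal]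

lemma chirpMatrix_eq (N : ℕ) (c : ℝ) :
    chirpMatrix N c = diagonal fun n : Fin N => expTwoPiI (-(c * (n : ℕ) ^ 2)) := by
  unfold chirpMatrix; congr 1; funext n; rw [expTwoPiI]; congr 1; push_cast; ring

lemma dopplerMatrix_eq (N : ℕ) (f : ℤ) :
    dopplerMatrix N f = diagonal fun n : Fin N => expTwoPiI (-(f * (n : ℕ) / N)) := by
  unfold dopplerMatrix; congr 1; funext n; rw [expTwoPiI]; congr 1; push_cast; ring

lemma dopplerMatrix_mul_dopplerMatrix (N : ℕ) (f g : ℤ) :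
    dopplerMatrix N f * dopplerMatrix N g = dopplerMatrix N (f + g) := by
  simp only [dopplerMatrix_eq, diagonal_mul_diagonal, ← expTwoPiI_add]
  congr 1; funext n; congr 1; push_cast; ring

lemma commute_chirpMatrix_dopplerMatrix (N : ℕ) (c : ℝ) (f : ℤ) :
    Commute (chirpMatrix N c) (dopplerMatrix N f) := by
  simp only [Commute, SemiconjBy, chirpMatrix, dopplerMatrix, diagonal_mul_diagonal, mul_comm]

lemma periodic_expTwoPiI_mul_div (N : ℕ) [NeZero N] (j : ℤ) :
    Function.Periodic (fun x : ℤ => expTwoPiI (j * x / N)) N := fun x => by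
  have hN : (N : ℝ) ≠ 0 := NeZero.ne _
  dsimp only
  rw [← expTwoPiI_add_intCast (j * x / N) j]
  push_cast; field_simp

/-- Evenness of `N` is what makes the chirp `N`-periodic: `c(x + N)² - cx² = kx + kN/2`. -/
lemma periodic_expTwoPiI_chirp {N : ℕ} (hN : Even N) {c : ℝ} {k : ℤ} (hk : 2 * N * c = k) :
    Function.Periodic (fun x : ℤ => expTwoPiI (c * x ^ 2)) N := fun x => by
  obtain ⟨M, rfl⟩ := hN
  dsimp only
  rw [← expTwoPiI_add_intCast (c * x ^ 2) (k * x + k * M)]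
  push_cast [← hk]; ring_nf

lemma chirp_conj_delayMatrix {N : ℕ} (hN : Even N) [NeZero N] {c : ℝ}
    {k : ℤ} (hk : 2 * N * c = k) (ℓ : ℕ) :
    chirpMatrix N c * delayMatrix N ℓ * (chirpMatrix N c)ᴴ =
      expTwoPiI (c * ℓ ^ 2) • (dopplerMatrix N (k * ℓ) * delayMatrix N ℓ) := by
  have hN0 : (N : ℝ) ≠ 0 := NeZero.ne _
  ext n n'
  simp only [chirpMatrix_eq, dopplerMatrix_eq, diagonal_conjTranspose, diagonal_mul,
    mul_diagonal, Matrix.smul_apply, smul_eq_mul, Pi.star_apply, star_expTwoPiI, neg_neg,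
    delayMatrix]
  split_ifs with h
  · have hperiod := (periodic_expTwoPiI_chirp hN hk).eq_of_intModEq h
    simp only [Int.cast_natCast] at hperiod
    rw [mul_one, mul_one, hperiod, ← expTwoPiI_add, ← expTwoPiI_add]
    congr 1
    rw [show c = k / (2 * N) by rw [← hk]; field_simp]
    push_cast; field_simp; ring
  · simp

lemma dft_conj_dopplerMatrix_mul_delayMatrix_apply (N : ℕ) [NeZero N] (a : ℤ) (ℓ : ℕ)
    (m m' : Fin N) :
    (dftMatrix N * (dopplerMatrix N a * delayMatrix N ℓ) * (dftMatrix N)ᴴ) m m' =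
      if (N : ℤ) ∣ m' - m - a then expTwoPiI (-((m' : ℕ) * ℓ / N)) else 0 := by
  have hN : (N : ℝ) ≠ 0 := NeZero.ne _
  have hcol (n : Fin N) : (delayMatrix N ℓ * (dftMatrix N)ᴴ) n m' =
      (Real.sqrt N : ℂ)⁻¹ * expTwoPiI ((m' : ℕ) * ((n : ℤ) - ℓ) / N) := by
    simp only [mul_apply, conjTranspose_dftMatrix_apply, mul_left_comm _ (Real.sqrt N : ℂ)⁻¹]
    rw [← Finset.mul_sum]
    congr 1
    exact_mod_cast sum_delayMatrix_mul ℓ (periodic_expTwoPiI_mul_div N m') n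
  rw [Matrix.mul_assoc, Matrix.mul_assoc, mul_apply]
  simp only [dopplerMatrix_eq, diagonal_mul, hcol, dftMatrix_apply]
  have hsqrt : (Real.sqrt N : ℂ)⁻¹ * (Real.sqrt N : ℂ)⁻¹ = (N : ℂ)⁻¹ := by
    rw [← mul_inv, ← Complex.ofReal_mul, Real.mul_self_sqrt (Nat.cast_nonneg N),
      Complex.ofReal_natCast]
  have hterm (n : Fin N) :
      (Real.sqrt N : ℂ)⁻¹ * expTwoPiI (-((m : ℕ) * (n : ℕ) / N)) *
          (expTwoPiI (-(a * (n : ℕ) / N)) *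
            ((Real.sqrt N : ℂ)⁻¹ * expTwoPiI ((m' : ℕ) * ((n : ℤ) - ℓ) / N))) =
        (N : ℂ)⁻¹ * expTwoPiI (-((m' : ℕ) * ℓ / N)) *
          expTwoPiI ((n : ℕ) * (((m' - m - a : ℤ) : ℝ) / N)) := by
    rw [← hsqrt, show ∀ s x y z : ℂ, s * x * (y * (s * z)) = s * s * (x * y * z) from
      fun _ _ _ _ => by ring, mul_assoc (_ * _), ← expTwoPiI_add, ← expTwoPiI_add, ← expTwoPiI_add]
    congr 2
    push_cast; field_simp; ring
  rw [Finset.sum_congr rfl fun n _ => hterm n, ← Finset.mul_sum, sum_expTwoPiI_mul_div]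
  split_ifs
  · rw [mul_comm, mul_inv_cancel_left₀ (Nat.cast_ne_zero.mpr (NeZero.ne N))]
  · rw [mul_zero]

lemma chirp_conj_dopplerMatrix_mul_delayMatrix {N : ℕ} (hN : Even N) [NeZero N] {c : ℝ} {k : ℤ}
    (hk : 2 * N * c = k) (f : ℤ) (ℓ : ℕ) :
    chirpMatrix N c * (dopplerMatrix N f * delayMatrix N ℓ) * (chirpMatrix N c)ᴴ =
      expTwoPiI (c * ℓ ^ 2) • (dopplerMatrix N (f + k * ℓ) * delayMatrix N ℓ) := by
  rw [← Matrix.mul_assoc, (commute_chirpMatrix_dopplerMatrix N c f).eq, Matrix.mul_assoc,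
    Matrix.mul_assoc, ← Matrix.mul_assoc _ _ (chirpMatrix N c)ᴴ,
    chirp_conj_delayMatrix hN hk, Matrix.mul_smul, ← Matrix.mul_assoc,
    dopplerMatrix_mul_dopplerMatrix]

noncomputable def afdmEffectiveChannel (N : ℕ) (c : ℝ) (H : Matrix (Fin N) (Fin N) ℂ) :
    Matrix (Fin N) (Fin N) ℂ :=
  dftMatrix N * chirpMatrix N c * H * (chirpMatrix N c)ᴴ * (dftMatrix N)ᴴ

lemma afdmEffectiveChannel_eq (N : ℕ) (c : ℝ) (H : Matrix (Fin N) (Fin N) ℂ) :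
    afdmEffectiveChannel N c H =
      dftMatrix N * (chirpMatrix N c * H * (chirpMatrix N c)ᴴ) * (dftMatrix N)ᴴ := by
  simp only [afdmEffectiveChannel, Matrix.mul_assoc]

lemma afdmEffectiveChannel_sum_smul (N : ℕ) (c : ℝ) {P : ℕ} (h : Fin P → ℂ)
    (H : Fin P → Matrix (Fin N) (Fin N) ℂ) :
    afdmEffectiveChannel N c (∑ p, h p • H p) = ∑ p, h p • afdmEffectiveChannel N c (H p) := by
  simp only [afdmEffectiveChannel, Matrix.mul_sum, Matrix.sum_mul, Matrix.mul_smul,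
    Matrix.smul_mul]

lemma afdmEffectiveChannel_dopplerMatrix_mul_delayMatrix_apply {N : ℕ} (hN : Even N) [NeZero N]
    {c : ℝ} {k : ℤ} (hk : 2 * N * c = k) (f : ℤ) (ℓ : ℕ) (m m' : Fin N) :
    afdmEffectiveChannel N c (dopplerMatrix N f * delayMatrix N ℓ) m m' =
      if (m' - m : ℤ) ≡ f + k * ℓ [ZMOD N] then expTwoPiI (c * ℓ ^ 2 - (m' : ℕ) * ℓ / N)
      else 0 := by
  rw [afdmEffectiveChannel_eq, chirp_conj_dopplerMatrix_mul_delayMatrix hN hk, Matrix.mul_smul,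
    Matrix.smul_mul, Matrix.smul_apply, dft_conj_dopplerMatrix_mul_delayMatrix_apply, smul_ite,
    smul_zero, smul_eq_mul, ← expTwoPiI_add, ← sub_eq_add_neg]
  exact if_congr (Int.modEq_comm.trans Int.modEq_iff_dvd).symm rfl rfl

lemma card_filter_le_of_forall_exists_modEq {N P : ℕ} (m : ℤ) (loc : Fin P → ℤ)
    (S : Fin N → Prop) [DecidablePred S] (hS : ∀ m', S m' → ∃ p, (m' - m : ℤ) ≡ loc p [ZMOD N]) :
    (Finset.univ.filter S).card ≤ P :=
  calc (Finset.univ.filter S).card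
      ≤ (Finset.univ.image fun p => loc p % N).card := by
        refine Finset.card_le_card_of_injOn (fun m' : Fin N => (m' - m : ℤ) % N) ?_ ?_
        · intro m' hm'
          obtain ⟨p, hp⟩ := hS m' (Finset.mem_filter.mp hm').2
          exact Finset.mem_image.mpr ⟨p, Finset.mem_univ p, hp.symm⟩
        · intro m₁ _ m₂ _ h₁₂
          exact Fin.eq_of_intCast_modEq (by simpa using Int.ModEq.add_right m h₁₂)
    _ ≤ P := Finset.card_image_le.trans_eq (Finset.card_fin P)

theorem afdm_multipath_effective_channel_general (N : ℕ) (hN : 0 < N) (hNeven : Even N)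
    (c₁ : ℝ) (k : ℤ) (hk : (2 * N * c₁ : ℝ) = k) (P : ℕ)
    (h : Fin P → ℂ) (f : Fin P → ℤ) (ℓ : Fin P → ℕ)
    (loc : Fin P → ℤ) (hloc : ∀ p, loc p = (f p + k * (ℓ p : ℤ)) % (N : ℤ))
    (hdistinct : Function.Injective loc) :
    let G : Matrix (Fin N) (Fin N) ℂ :=
      dftMatrix N * chirpMatrix N c₁ *
        (∑ p, h p • (dopplerMatrix N (f p) * delayMatrix N (ℓ p))) *
        (chirpMatrix N c₁)ᴴ * (dftMatrix N)ᴴ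
    (∀ (m m' : Fin N) (p : Fin P),
      Int.ModEq (N : ℤ) (m' : ℤ) ((m : ℤ) + loc p) →
        ‖G m m'‖ = ‖h p‖) ∧
    (∀ m m' : Fin N,
      (∀ p : Fin P, ¬ Int.ModEq (N : ℤ) ((m' : ℤ) - (m : ℤ)) (loc p)) → G m m' = 0) ∧
    (∀ m : Fin N, (Finset.univ.filter fun m' : Fin N => G m m' ≠ 0).card ≤ P) := by
  intro G
  have : NeZero N := ⟨hN.ne'⟩
  have hreduced (p : Fin P) : loc p % N = loc p := by rw [hloc, Int.emod_emod]
  have hloc_modEq (x : ℤ) (p : Fin P) : x ≡ f p + k * ℓ p [ZMOD N] ↔ x ≡ loc p [ZMOD N] := by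
    rw [Int.ModEq, Int.ModEq, hloc, Int.emod_emod]
  have hG (m m' : Fin N) : G m m' = ∑ p, if (m' - m : ℤ) ≡ loc p [ZMOD N] then
      h p * expTwoPiI (c₁ * ℓ p ^ 2 - (m' : ℕ) * ℓ p / N) else 0 := by
    simp only [G, ← afdmEffectiveChannel.eq_def, afdmEffectiveChannel_sum_smul, Matrix.sum_apply,
      Matrix.smul_apply, afdmEffectiveChannel_dopplerMatrix_mul_delayMatrix_apply hNeven hk,
      hloc_modEq, smul_eq_mul, mul_ite, mul_zero]
  have hzero (m m' : Fin N) (hm' : ∀ p, ¬ (m' - m : ℤ) ≡ loc p [ZMOD N]) : G m m' = 0 := by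
    rw [hG]
    exact Finset.sum_eq_zero fun p _ => if_neg (hm' p)
  refine ⟨fun m m' p hm' => ?_, hzero, fun m => ?_⟩
  · have hp : (m' - m : ℤ) ≡ loc p [ZMOD N] := by simpa using hm'.sub_right (m : ℤ)
    rw [hG, Finset.sum_eq_single p, if_pos hp, norm_mul, norm_expTwoPiI, mul_one]
    · refine fun q _ hqp => if_neg fun hq => hqp (hdistinct ?_)
      rw [← hreduced q, ← hreduced p]
      exact hq.symm.trans hp
    · simp
  · exact card_filter_le_of_forall_exists_modEq m loc _ fun m' hm' => by
      by_contra! hnone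
      exact hm' (hzero m m' hnone)

/-- **Multipath AFDM effective channel structure**: for even `N`, `k = 2Nc₁ ∈ ℤ`, and a
`P`-path doubly-dispersive channel with pairwise distinct location indices
`loc_p = (f_p + k·ℓ_p) mod N`, row `m` of the effective channel
`G = F_N·Λ_{c₁}·(Σ_p h_p·W^{f_p}·L^{ℓ_p})·Λ_{c₁}ᴴ·F_Nᴴ` has an entry of modulus `|h_p|`
at each column `m' ≡ m + loc_p (mod N)`, zero entries at all other columns, and hence
at most `P` nonzero entries. -/
theorem afdm_multipath_effective_channel (N : ℕ) (hN : 0 < N) (hNeven : Even N)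
    (c₁ : ℝ) (k : ℤ) (hk : (2 * N * c₁ : ℝ) = k) (P : ℕ)
    (h : Fin P → ℂ) (f : Fin P → ℤ) (ℓ : Fin P → ℕ) (hℓ : ∀ p, ℓ p < N)
    (loc : Fin P → ℤ) (hloc : ∀ p, loc p = (f p + k * (ℓ p : ℤ)) % (N : ℤ))
    (hdistinct : Function.Injective loc) :
    let G : Matrix (Fin N) (Fin N) ℂ :=
      dftMatrix N * chirpMatrix N c₁ *
        (∑ p, h p • (dopplerMatrix N (f p) * delayMatrix N (ℓ p))) *
        (chirpMatrix N c₁)ᴴ * (dftMatrix N)ᴴ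
    (∀ (m m' : Fin N) (p : Fin P),
      Int.ModEq (N : ℤ) (m' : ℤ) ((m : ℤ) + loc p) →
        ‖G m m'‖ = ‖h p‖) ∧
    (∀ m m' : Fin N,
      (∀ p : Fin P, ¬ Int.ModEq (N : ℤ) ((m' : ℤ) - (m : ℤ)) (loc p)) → G m m' = 0) ∧
    (∀ m : Fin N, (Finset.univ.filter fun m' : Fin N => G m m' ≠ 0).card ≤ P) :=
  afdm_multipath_effective_channel_general N hN hNeven c₁ k hk P h f ℓ loc hloc hdistinct
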